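/- arXiv:1408.0076 — 2 statements merged into one kernel-verified Lean document; each statement's English description precedes it below -/
import Mathlib

section
/- Let G = U₁U₂ be an internal central product of subgroups U₁ and U₂, and H ≤ G. Then H is subnormal in G of defect at most r if and only if the iterated commutator subgroup [Uᵢ, H, …, H] (with H appearing r times) is contained in Uᵢ ∩ H for i = 1, 2. -/
/-- `H` is subnormal in `G` with a chain of length at most `r`. -/
def SubnormalOfDefectLE {G : Type*} [Group G] (H : Subgroup G) (r : ℕ) : Prop :=
  ∃ c : ℕ → Subgroup G, c 0 = H ∧ c r = ⊤ ∧
    ∀ i < r, c i ≤ c (i + 1) ∧ ((c i).subgroupOf (c (i + 1))).Normal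

/-- Left-normed iterated commutator `[U, H, …, H]` with `H` appearing `n` times. -/
def iterComm {G : Type*} [Group G] (U H : Subgroup G) : ℕ → Subgroup G
  | 0 => U
  | n + 1 => ⁅iterComm U H n, H⁆

/-!
If `H = c₀ ⊴ c₁ ⊴ ⋯ ⊴ c_r = G`, then `H ≤ c_j ⊴ c_{j+1}` gives `⁅c_{j+1}, H⁆ ≤ c_j`; descending
the chain, `[U, H, …, H] ≤ c₀ = H` (with `r` copies of `H`) for every subgroup `U`. Each `Uᵢ` is
normal, being centralized by the other factor, so the iterated commutator also lies in `Uᵢ`.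

Conversely, let `cᵢ = H ⊔ [U₁, H, …, H] ⊔ [U₂, H, …, H]` with `r - i` copies of `H`: then `c₀ = H`
and `c_r = G`. Writing `c_{i+1} = H ⊔ X₁ ⊔ X₂`, we get `cᵢ = H ⊔ ⁅X₁, H⁆ ⊔ ⁅X₂, H⁆`. Now `X₁`
normalizes `H ⊔ ⁅X₁, H⁆` (as `x h x⁻¹ = ⁅x, h⁆ h`) and centralizes `⁅X₂, H⁆ ≤ U₂`; symmetrically
for `X₂`, so `c_{i+1}` normalizes `cᵢ`.
-/

open Subgroup

section

variable {G : Type*} [Group G]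

lemma subnormalOfDefectLE_iff_le_normalizer (H : Subgroup G) (r : ℕ) :
    SubnormalOfDefectLE H r ↔ ∃ c : ℕ → Subgroup G, c 0 = H ∧ c r = ⊤ ∧
      ∀ i < r, c i ≤ c (i + 1) ∧ c (i + 1) ≤ normalizer (c i : Set G) := by
  refine exists_congr fun c => and_congr_right fun _ => and_congr_right fun _ =>
    forall₂_congr fun i _ => and_congr_right fun hle => ?_
  exact normal_subgroupOf_iff_le_normalizer hle

lemma normal_of_sup_eq_top_of_commutator_eq_bot {U V : Subgroup G} (hUV : U ⊔ V = ⊤)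
    (hc : ⁅V, U⁆ = ⊥) : U.Normal := by
  have hV : V ≤ normalizer (U : Set G) :=
    le_normalizer_iff_commutator_le_right.2 (hc ▸ bot_le)
  rw [← normalizer_eq_top_iff, eq_top_iff, ← hUV]
  exact sup_le le_normalizer hV

lemma iterComm_le_self (U H : Subgroup G) [U.Normal] : ∀ n, iterComm U H n ≤ U
  | 0 => le_rfl
  | n + 1 => (commutator_mono (iterComm_le_self U H n) le_rfl).trans (commutator_le_left U H)

lemma le_normalizer_sup_commutator (A H : Subgroup G) :
    A ≤ normalizer ((H ⊔ ⁅A, H⁆ : Subgroup G) : Set G) := by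
  rw [le_normalizer_iff]
  intro g hg
  suffices H ⊔ ⁅A, H⁆ ≤ (H ⊔ ⁅A, H⁆).comap (MulAut.conj g).toMonoidHom from fun k hk => this hk
  refine sup_le (fun h hh => ?_) (fun k hk => ?_)
  · rw [mem_comap, MulEquiv.coe_toMonoidHom, conj_eq_commutatorElement_mul]
    exact mul_mem (mem_sup_right (commutator_mem_commutator hg hh)) (mem_sup_left hh)
  · exact mem_sup_right ((mem_normalizer_iff.1 (normalizer_commutator_ge_left A H hg) k).1 hk)

lemma sup_sup_le_normalizer_sup_commutator_sup_commutator {A B H : Subgroup G}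
    (hA : ⁅A, ⁅B, H⁆⁆ = ⊥) (hB : ⁅B, ⁅A, H⁆⁆ = ⊥) :
    H ⊔ A ⊔ B ≤ normalizer ((H ⊔ ⁅A, H⁆ ⊔ ⁅B, H⁆ : Subgroup G) : Set G) := by
  have hHA := le_normalizer_sup_commutator A H
  have hHB := le_normalizer_sup_commutator B H
  have hAB : A ≤ normalizer ((⁅B, H⁆ : Subgroup G) : Set G) :=
    le_normalizer_iff_commutator_le_right.2 (hA ▸ bot_le)
  have hBA : B ≤ normalizer ((⁅A, H⁆ : Subgroup G) : Set G) :=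
    le_normalizer_iff_commutator_le_right.2 (hB ▸ bot_le)
  refine sup_le (sup_le (le_sup_left.trans (le_sup_left.trans le_normalizer)) ?_) ?_
  · exact (le_inf hHA hAB).trans (normalizer_inf_normalizer_le_normalizer_sup _ _)
  · rw [sup_right_comm]
    exact (le_inf hHB hBA).trans (normalizer_inf_normalizer_le_normalizer_sup _ _)

lemma SubnormalOfDefectLE.iterComm_le {H : Subgroup G} {r : ℕ} (hH : SubnormalOfDefectLE H r)
    (U : Subgroup G) : iterComm U H r ≤ H := by
  obtain ⟨c, hc0, hcr, hc⟩ := (subnormalOfDefectLE_iff_le_normalizer H r).1 hH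
  have hHc : ∀ j ≤ r, H ≤ c j := by
    intro j hj
    induction j with
    | zero => exact hc0.ge
    | succ j ih => exact (ih (by omega)).trans (hc j (by omega)).1
  have key : ∀ j ≤ r, iterComm U H (r - j) ≤ c j := fun j hj => by
    induction hj using Nat.decreasingInduction with
    | self => exact hcr ▸ le_top
    | of_succ j hj ih =>
      rw [show r - j = r - (j + 1) + 1 by omega]
      exact (commutator_mono ih (hHc j hj.le)).trans
        (le_normalizer_iff_commutator_le_right.1 (hc j hj).2)
  simpa only [Nat.sub_zero, hc0] using key 0 r.zero_le

lemma subnormalOfDefectLE_of_iterComm_le {U₁ U₂ H : Subgroup G} [U₁.Normal] [U₂.Normal]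
    (hU : U₁ ⊔ U₂ = ⊤) (hc : ⁅U₁, U₂⁆ = ⊥) {r : ℕ} (h₁ : iterComm U₁ H r ≤ H)
    (h₂ : iterComm U₂ H r ≤ H) : SubnormalOfDefectLE H r := by
  rw [subnormalOfDefectLE_iff_le_normalizer]
  refine ⟨fun i => H ⊔ iterComm U₁ H (r - i) ⊔ iterComm U₂ H (r - i), ?_, ?_, fun i hi => ?_⟩
  · simp only [Nat.sub_zero, sup_assoc, sup_eq_left]
    exact sup_le h₁ h₂
  · simp only [Nat.sub_self, iterComm, sup_assoc, hU, sup_top_eq]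
  obtain ⟨n, hn⟩ : ∃ n, r - i = n + 1 := ⟨r - (i + 1), by omega⟩
  have hn' : r - (i + 1) = n := by omega
  simp only [hn, hn', iterComm]
  have hc₁₂ : ⁅iterComm U₁ H n, ⁅iterComm U₂ H n, H⁆⁆ = ⊥ :=
    eq_bot_mono (commutator_mono (iterComm_le_self U₁ H n) (iterComm_le_self U₂ H (n + 1))) hc
  have hc₂₁ : ⁅iterComm U₂ H n, ⁅iterComm U₁ H n, H⁆⁆ = ⊥ :=
    eq_bot_mono (commutator_mono (iterComm_le_self U₂ H n) (iterComm_le_self U₁ H (n + 1)))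
      (commutator_comm U₁ U₂ ▸ hc)
  refine ⟨?_, sup_sup_le_normalizer_sup_commutator_sup_commutator hc₁₂ hc₂₁⟩
  grw [commutator_le_sup (iterComm U₁ H n) H, commutator_le_sup (iterComm U₂ H n) H]
  simp only [sup_le_iff, le_sup_left, le_sup_right, le_sup_of_le_left, true_and]

end

theorem stmt_9 {G : Type*} [Group G] (U₁ U₂ : Subgroup G)
    (hprod : ∀ g : G, ∃ u ∈ U₁, ∃ v ∈ U₂, g = u * v)
    (hcomm : ⁅U₁, U₂⁆ = (⊥ : Subgroup G)) (H : Subgroup G) (r : ℕ) :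
    SubnormalOfDefectLE H r ↔
      (iterComm U₁ H r ≤ U₁ ⊓ H ∧ iterComm U₂ H r ≤ U₂ ⊓ H) := by
  have hU : U₁ ⊔ U₂ = ⊤ := eq_top_iff.2 fun g _ => by
    obtain ⟨u, hu, v, hv, rfl⟩ := hprod g
    exact mul_mem_sup hu hv
  have : U₁.Normal :=
    normal_of_sup_eq_top_of_commutator_eq_bot hU (commutator_comm U₂ U₁ ▸ hcomm)
  have : U₂.Normal := normal_of_sup_eq_top_of_commutator_eq_bot (sup_comm U₁ U₂ ▸ hU) hcomm
  constructor
  · intro hH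
    exact ⟨le_inf (iterComm_le_self U₁ H r) (hH.iterComm_le U₁),
      le_inf (iterComm_le_self U₂ H r) (hH.iterComm_le U₂)⟩
  · rintro ⟨h₁, h₂⟩
    exact subnormalOfDefectLE_of_iterComm_le hU hcomm (h₁.trans inf_le_right)
      (h₂.trans inf_le_right)
end

section
/- Let ε : D → G be a group epimorphism and H ≤ G. Then H is abnormal in G if and only if ε⁻¹(H) is abnormal in D. -/
/-- The conjugate subgroup `A^x = x⁻¹Ax`. -/
def conjSubgroup {G : Type*} [Group G] (A : Subgroup G) (x : G) : Subgroup G :=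
  A.map (MulAut.conj x⁻¹).toMonoidHom

/-- `H` is abnormal in `G` if `g ∈ ⟨H, H^g⟩` for all `g`. -/
def IsAbnormal {G : Type*} [Group G] (H : Subgroup G) : Prop :=
  ∀ g : G, g ∈ H ⊔ conjSubgroup H g

lemma mem_conjSubgroup_iff {G : Type*} [Group G] (A : Subgroup G) (x g : G) :
    g ∈ conjSubgroup A x ↔ x * g * x⁻¹ ∈ A := by
  constructor
  · rintro ⟨a, ha, rfl⟩
    simp only [MulEquiv.coe_toMonoidHom, MulAut.conj_apply]
    simpa [mul_assoc] using ha
  · intro h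
    refine ⟨x * g * x⁻¹, h, ?_⟩
    simp only [MulEquiv.coe_toMonoidHom, MulAut.conj_apply]
    group

lemma conjSubgroup_comap {D G : Type*} [Group D] [Group G] (ε : D →* G)
    (H : Subgroup G) (d : D) :
    conjSubgroup (H.comap ε) d = (conjSubgroup H (ε d)).comap ε := by
  ext x
  simp [mem_conjSubgroup_iff, Subgroup.mem_comap]

theorem stmt_12 {D G : Type*} [Group D] [Group G] (ε : D →* G)
    (hsurj : Function.Surjective ε) (H : Subgroup G) :
    IsAbnormal H ↔ IsAbnormal (H.comap ε) := by
  constructor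
  · intro hA d
    rw [conjSubgroup_comap, Subgroup.comap_sup_eq _ _ _ hsurj]
    exact hA (ε d)
  · intro hA g
    obtain ⟨d, rfl⟩ := hsurj g
    have := hA d
    rw [conjSubgroup_comap, Subgroup.comap_sup_eq _ _ _ hsurj] at this
    exact this
end
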